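/- For every connected graph G, a set T ⊆ V(G) is a minimal connected dominating set of G if and only if T is a minimal transversal of the hypergraph S(G) of inclusion-minimal separators of G; that is, CD(G) = tr(S(G)). -/

import Mathlib

open Set

variable {V : Type*}

/-- The closed neighbourhood `N_G[A]` of a set of vertices. -/
def closedNbhdSet (G : SimpleGraph V) (A : Set V) : Set V :=
  ⋃ x ∈ A, insert x (G.neighborSet x)

/-- `D` is a dominating set of `G`. -/
def Dominates (G : SimpleGraph V) (D : Set V) : Prop := ∀ v, v ∈ closedNbhdSet G D

/-- `D` is a connected dominating set of `G`: a dominating set inducing a connected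
subgraph. -/
def ConnDom (G : SimpleGraph V) (D : Set V) : Prop :=
  Dominates G D ∧ (G.induce D).Connected

/-- `S` is a separator of `G`: removing `S` leaves a graph which is not connected. -/
def Separator (G : SimpleGraph V) (S : Set V) : Prop := ¬ (G.induce Sᶜ).Connected

/-- `T` is a transversal of the hypergraph with hyperedge set `E`. -/
def Transversal (E : Set (Set V)) (T : Set V) : Prop := ∀ e ∈ E, (T ∩ e).Nonempty

/-! A connected dominating set `T` meets every separator `S`: otherwise `T ⊆ Sᶜ`, and every
vertex of `Sᶜ` is joined to the connected set `T`. Conversely, let `T` meet every separator. If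
some `v` were undominated, the neighbourhood of `v` would be a separator avoiding `T`; if `T`
were disconnected, the outer boundary of a component of `G[T]` would be one. Since every
separator of a finite graph contains a minimal one, the connected dominating sets are exactly
the transversals of `S(G)`, so their minimal elements coincide. -/

section

open SimpleGraph

variable {G : SimpleGraph V}

lemma mem_closedNbhdSet {A : Set V} {v : V} :
    v ∈ closedNbhdSet G A ↔ ∃ x ∈ A, v = x ∨ G.Adj x v := by
  simp [closedNbhdSet]

lemma ConnDom.connected_induce_of_subset {T s : Set V} (hT : ConnDom G T) (hTs : T ⊆ s) :
    (G.induce s).Connected := by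
  obtain ⟨⟨t₀, ht₀⟩⟩ := hT.2.nonempty
  refine G.induce_connected_of_patches t₀ (hTs ht₀) fun {v} hv => ?_
  obtain ⟨t, ht, rfl | hadj⟩ := mem_closedNbhdSet.1 (hT.1 v)
  · exact ⟨T, hTs, ht₀, ht, hT.2.preconnected _ _⟩
  · have hconn : (G.induce (T ∪ {t, v})).Connected :=
      induce_union_connected hT.2.preconnected (induce_pair_connected_of_adj hadj).preconnected
        ⟨t, ht, mem_insert t _⟩
    exact ⟨T ∪ {t, v}, union_subset hTs (insert_subset (hTs ht) (singleton_subset_iff.2 hv)),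
      Or.inl ht₀, Or.inr (mem_insert_of_mem t rfl), hconn.preconnected _ _⟩

lemma ConnDom.inter_nonempty_of_separator {T S : Set V} (hT : ConnDom G T)
    (hS : Separator G S) : (T ∩ S).Nonempty := by
  by_contra h
  exact hS (hT.connected_induce_of_subset fun t ht hts => h ⟨t, ht, hts⟩)

lemma separator_univ : Separator G univ :=
  fun h => h.nonempty.elim fun x => x.2 (mem_univ _)

def SimpleGraph.outerBoundary (G : SimpleGraph V) (A : Set V) : Set V :=
  {v | v ∉ A ∧ ∃ u ∈ A, G.Adj u v}

lemma separator_outerBoundary {A : Set V} {a b : V} (ha : a ∈ A) (hb : b ∉ A)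
    (hb' : b ∉ G.outerBoundary A) : Separator G (G.outerBoundary A) := by
  intro hconn
  obtain ⟨w⟩ := hconn.preconnected ⟨a, fun h => h.1 ha⟩ ⟨b, hb'⟩
  obtain ⟨d, -, hd₁, hd₂⟩ := w.exists_boundary_dart (Subtype.val ⁻¹' A) ha hb
  exact d.snd.2 ⟨hd₂, d.fst, hd₁, d.adj⟩

lemma dominates_of_forall_separator {T : Set V}
    (hT : ∀ S, Separator G S → (T ∩ S).Nonempty) : Dominates G T := by
  obtain ⟨t₀, ht₀, -⟩ := hT univ separator_univ
  intro v
  by_contra hv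
  simp only [mem_closedNbhdSet, not_exists, not_and, not_or] at hv
  have hsep : Separator G (G.outerBoundary {v}) :=
    separator_outerBoundary (mem_singleton v) (fun h => (hv t₀ ht₀).1 h.symm)
      fun ⟨_, u, hu, hadj⟩ => (hv t₀ ht₀).2 (hu ▸ hadj).symm
  obtain ⟨t, htT, -, u, hu, hadj⟩ := hT _ hsep
  exact (hv t htT).2 (hu ▸ hadj).symm

lemma connected_induce_of_forall_separator {T : Set V}
    (hT : ∀ S, Separator G S → (T ∩ S).Nonempty) : (G.induce T).Connected := by
  obtain ⟨t₀, ht₀, -⟩ := hT univ separator_univ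
  have : Nonempty T := ⟨⟨t₀, ht₀⟩⟩
  refine ⟨fun a b => ?_⟩
  by_contra hab
  let A : Set V := {v | ∃ h : v ∈ T, (G.induce T).Reachable a ⟨v, h⟩}
  have hTA : ∀ v ∈ T, v ∉ G.outerBoundary A := by
    rintro v hv ⟨hvA, u, ⟨hu, hau⟩, hadj⟩
    have huv : (G.induce T).Adj ⟨u, hu⟩ ⟨v, hv⟩ := hadj
    exact hvA ⟨hv, hau.trans huv.reachable⟩
  have hsep : Separator G (G.outerBoundary A) :=
    separator_outerBoundary (a := a) ⟨a.2, .rfl⟩ (fun ⟨_, hr⟩ => hab hr) (hTA b b.2)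
  obtain ⟨t, htT, hts⟩ := hT _ hsep
  exact hTA t htT hts

lemma connDom_iff_forall_separator {T : Set V} :
    ConnDom G T ↔ ∀ S, Separator G S → (T ∩ S).Nonempty :=
  ⟨fun hT _ => hT.inter_nonempty_of_separator,
    fun hT => ⟨dominates_of_forall_separator hT, connected_induce_of_forall_separator hT⟩⟩

lemma connDom_iff_transversal_minimal_separators [Finite V] {T : Set V} :
    ConnDom G T ↔ Transversal {S : Set V | Minimal (Separator G) S} T := by
  rw [connDom_iff_forall_separator]
  refine ⟨fun hT S hS => hT S hS.1, fun hT S hS => ?_⟩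
  obtain ⟨S', hS'S, hS'⟩ := exists_minimal_le_of_wellFoundedLT _ S hS
  exact (hT S' hS').mono (inter_subset_inter_right T hS'S)

end

theorem stmt_19_general [Fintype V] (G : SimpleGraph V) (T : Set V) :
    Minimal (ConnDom G) T ↔
      Minimal (Transversal {S : Set V | Minimal (Separator G) S}) T := by
  have hCD : ConnDom G = Transversal {S : Set V | Minimal (Separator G) S} :=
    funext fun _ => propext connDom_iff_transversal_minimal_separators
  rw [hCD]

/-- For every connected graph `G`, the minimal connected dominating sets of `G` are
exactly the minimal transversals of the hypergraph of inclusion-minimal separators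
of `G`; that is, `CD(G) = tr(S(G))`. -/
theorem stmt_19 [Fintype V] (G : SimpleGraph V) (hG : G.Connected) (T : Set V) :
    Minimal (ConnDom G) T ↔
      Minimal (Transversal {S : Set V | Minimal (Separator G) S}) T :=
  stmt_19_general G T
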